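/- arXiv:2402.04669 — 2 statements merged into one kernel-verified Lean document; each statement's English description precedes it below -/
import Mathlib

section
/- For all a, b ∈ (1/4, 1/2) there exists a constant C > 0 (depending only on a and b) such that for all α, β ∈ ℝ one has ∫_ℝ ⟨x−α⟩^{−2a} ⟨x−β⟩^{−2b} dx ≤ C ⟨α−β⟩^{−(2a+2b−1)}. -/
/-!
Write `s = 2a`, `t = 2b` and `D = ⟨α - β⟩`. Where `x` is at least as close to `α` as to `β`, the
triangle inequality gives `⟨x - β⟩ ≥ D / 2` and `⟨x - β⟩ ≥ ⟨x - α⟩`, so the integrand is at most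
`⟨x - α⟩^{-s} min (2^t D^{-t}, ⟨x - α⟩^{-t})`; symmetrically near `β`. Integrating such a one-centre
bound, the range `⟨y⟩ ≤ D` contributes `2^t D^{-t} · O(D^{1-s})` since `s < 1`, and the range
`⟨y⟩ > D` contributes `O(D^{1-s-t})` since `s + t > 1`.
-/

open MeasureTheory Real Set

noncomputable section

/-- Japanese bracket `⟨c⟩ = 1 + |c|`. -/
def jb (c : ℝ) : ℝ := 1 + |c|

lemma one_le_jb (c : ℝ) : 1 ≤ jb c := le_add_of_nonneg_right (abs_nonneg c)

lemma jb_pos (c : ℝ) : 0 < jb c := one_pos.trans_le (one_le_jb c)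

lemma jb_sub_comm (u v : ℝ) : jb (u - v) = jb (v - u) := by rw [jb, jb, abs_sub_comm]

section

variable {s t K : ℝ}

lemma rpow_mul_min_nonneg (hK : 0 ≤ K) {z : ℝ} (hz : 0 ≤ z) : 0 ≤ z ^ (-s) * min K (z ^ (-t)) :=
  mul_nonneg (rpow_nonneg hz _) (le_min hK (rpow_nonneg hz _))

lemma jb_rpow_neg_le_min (ht : 0 ≤ t) {u v : ℝ} (huv : |u| ≤ |v|) :
    jb v ^ (-t) ≤ min (2 ^ t * jb (v - u) ^ (-t)) (jb u ^ (-t)) := by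
  have h_diff : jb (v - u) ≤ 2 * jb v := by
    have := abs_sub v u
    unfold jb
    linarith
  have h_u : jb u ≤ jb v := add_le_add_right huv 1
  refine le_min ?_ (rpow_le_rpow_of_nonpos (jb_pos u) h_u (neg_nonpos.2 ht))
  calc jb v ^ (-t) = 2 ^ t * (2 * jb v) ^ (-t) := by
        rw [mul_rpow zero_le_two (jb_pos v).le, ← mul_assoc, ← rpow_add two_pos, add_neg_cancel,
          rpow_zero, one_mul]
    _ ≤ 2 ^ t * jb (v - u) ^ (-t) :=
        mul_le_mul_of_nonneg_left (rpow_le_rpow_of_nonpos (jb_pos _) h_diff (neg_nonpos.2 ht))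
          (by positivity)

lemma jb_rpow_mul_jb_rpow_le (hs : 0 ≤ s) (ht : 0 ≤ t) (u v : ℝ) :
    jb u ^ (-s) * jb v ^ (-t) ≤
      jb u ^ (-s) * min (2 ^ t * jb (v - u) ^ (-t)) (jb u ^ (-t)) +
        jb v ^ (-t) * min (2 ^ s * jb (v - u) ^ (-s)) (jb v ^ (-s)) := by
  have hu := (jb_pos u).le
  have hv := (jb_pos v).le
  have hd := (jb_pos (v - u)).le
  rcases le_total |u| |v| with huv | hvu
  · refine le_add_of_le_of_nonneg ?_ (rpow_mul_min_nonneg (by positivity) hv)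
    exact mul_le_mul_of_nonneg_left (jb_rpow_neg_le_min ht huv) (by positivity)
  · have h := jb_rpow_neg_le_min hs hvu
    rw [jb_sub_comm] at h
    rw [mul_comm]
    refine le_add_of_nonneg_of_le (rpow_mul_min_nonneg (by positivity) hu) ?_
    exact mul_le_mul_of_nonneg_left h (by positivity)

lemma rpow_mul_min_le_rpow_add {z : ℝ} (hz : 0 < z) :
    z ^ (-s) * min K (z ^ (-t)) ≤ z ^ (-(s + t)) := by
  rw [neg_add, rpow_add hz]
  exact mul_le_mul_of_nonneg_left (min_le_right _ _) (rpow_nonneg hz.le _)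

lemma integrableOn_rpow_mul_min_Ioi (hst : 1 < s + t) (hK : 0 ≤ K) :
    IntegrableOn (fun z : ℝ => z ^ (-s) * min K (z ^ (-t))) (Ioi 1) := by
  refine (integrableOn_Ioi_rpow_of_lt (by linarith : -(s + t) < -1) one_pos).mono'
    (by fun_prop : Measurable _).aestronglyMeasurable ?_
  filter_upwards [ae_restrict_mem measurableSet_Ioi] with z hz
  have hz : (0 : ℝ) < z := one_pos.trans hz
  rw [norm_of_nonneg (rpow_mul_min_nonneg hK hz.le)]
  exact rpow_mul_min_le_rpow_add hz

lemma integrable_jb_rpow_mul_min (hst : 1 < s + t) (hK : 0 ≤ K) :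
    Integrable (fun y : ℝ => jb y ^ (-s) * min K (jb y ^ (-t))) := by
  have h_dom : Integrable (fun y : ℝ => jb y ^ (-(s + t))) :=
    integrable_one_add_norm (by simpa using hst)
  refine h_dom.mono' (by unfold jb; fun_prop : Measurable _).aestronglyMeasurable
    (ae_of_all _ fun y => ?_)
  have hy := jb_pos y
  rw [norm_of_nonneg (rpow_mul_min_nonneg hK hy.le)]
  exact rpow_mul_min_le_rpow_add hy

lemma integral_jb_rpow_mul_min_le (hs : s < 1) (hst : 1 < s + t) {c D : ℝ} (hc : 0 ≤ c)
    (hD : 1 ≤ D) :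
    ∫ y, jb y ^ (-s) * min (c * D ^ (-t)) (jb y ^ (-t)) ≤
      2 * (c / (1 - s) + 1 / (s + t - 1)) * D ^ (-(s + t - 1)) := by
  set φ : ℝ → ℝ := fun z => z ^ (-s) * min (c * D ^ (-t)) (z ^ (-t))
  have hD0 : 0 < D := one_pos.trans_le hD
  have hφ := integrableOn_rpow_mul_min_Ioi hst (by positivity : 0 ≤ c * D ^ (-t))
  have h_abs : ∫ y, φ (jb y) = 2 * ∫ z in Ioi 1, φ z := by
    rw [show ∫ y, φ (jb y) = ∫ y, φ (1 + |y|) from rfl,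
      integral_comp_abs (f := fun y => φ (1 + y))]
    congr 1
    have := (measurePreserving_add_left volume (1 : ℝ)).setIntegral_preimage_emb
      (measurableEmbedding_addLeft 1) φ (Ioi 1)
    rwa [preimage_const_add_Ioi, sub_self] at this
  have h_near : ∫ z in (1 : ℝ)..D, φ z ≤ c * D ^ (-(s + t - 1)) / (1 - s) := by
    have hs' : 0 < 1 - s := by linarith
    calc ∫ z in (1 : ℝ)..D, φ z ≤ ∫ z in (1 : ℝ)..D, c * D ^ (-t) * z ^ (-s) :=
          intervalIntegral.integral_mono_on hD
            ((intervalIntegrable_iff_integrableOn_Ioc_of_le hD).2 (hφ.mono_set Ioc_subset_Ioi_self))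
            ((intervalIntegral.intervalIntegrable_rpow' (by linarith)).const_mul _)
            (fun z hz => by
              rw [mul_comm]
              exact mul_le_mul_of_nonneg_left (min_le_left _ _)
                (rpow_nonneg (zero_le_one.trans hz.1) _))
      _ = c * D ^ (-t) * ((D ^ (1 - s) - 1) / (1 - s)) := by
          rw [intervalIntegral.integral_const_mul, integral_rpow (Or.inl (by linarith)), one_rpow,
            neg_add_eq_sub]
      _ ≤ c * D ^ (-t) * (D ^ (1 - s) / (1 - s)) := by gcongr; linarith
      _ = c * D ^ (-(s + t - 1)) / (1 - s) := by
          rw [mul_div_assoc', mul_assoc, ← rpow_add hD0]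
          ring_nf
  have h_tail : ∫ z in Ioi D, φ z ≤ D ^ (-(s + t - 1)) / (s + t - 1) := by
    calc ∫ z in Ioi D, φ z ≤ ∫ z in Ioi D, z ^ (-(s + t)) :=
          setIntegral_mono_on (hφ.mono_set (Ioi_subset_Ioi hD))
            (integrableOn_Ioi_rpow_of_lt (by linarith) hD0) measurableSet_Ioi
            (fun z hz => rpow_mul_min_le_rpow_add (hD0.trans hz))
      _ = D ^ (-(s + t - 1)) / (s + t - 1) := by
          rw [integral_Ioi_rpow_of_lt (by linarith) hD0, show -(s + t) + 1 = -(s + t - 1) by ring,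
            neg_div_neg_eq]
  rw [h_abs, ← intervalIntegral.integral_interval_add_Ioi hφ (hφ.mono_set (Ioi_subset_Ioi hD))]
  calc 2 * ((∫ z in (1 : ℝ)..D, φ z) + ∫ z in Ioi D, φ z)
      ≤ 2 * (c * D ^ (-(s + t - 1)) / (1 - s) + D ^ (-(s + t - 1)) / (s + t - 1)) := by
        gcongr
    _ = 2 * (c / (1 - s) + 1 / (s + t - 1)) * D ^ (-(s + t - 1)) := by ring

lemma integral_jb_rpow_mul_jb_rpow_le (hs : s < 1) (ht : t < 1) (hst : 1 < s + t) (α β : ℝ) :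
    ∫ x, jb (x - α) ^ (-s) * jb (x - β) ^ (-t) ≤
      (2 * (2 ^ t / (1 - s) + 1 / (s + t - 1)) + 2 * (2 ^ s / (1 - t) + 1 / (s + t - 1))) *
        jb (α - β) ^ (-(s + t - 1)) := by
  set D := jb (α - β)
  have hD : 0 < D := jb_pos _
  set G : ℝ → ℝ := fun y => jb y ^ (-s) * min (2 ^ t * D ^ (-t)) (jb y ^ (-t))
  set H : ℝ → ℝ := fun y => jb y ^ (-t) * min (2 ^ s * D ^ (-s)) (jb y ^ (-s))
  have hG : Integrable G := integrable_jb_rpow_mul_min hst (by positivity)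
  have hH : Integrable H := integrable_jb_rpow_mul_min (by linarith) (by positivity)
  calc ∫ x, jb (x - α) ^ (-s) * jb (x - β) ^ (-t)
      ≤ ∫ x, (G (x - α) + H (x - β)) := by
        refine integral_mono_of_nonneg (ae_of_all _ fun x => ?_)
          ((hG.comp_sub_right α).add (hH.comp_sub_right β)) (ae_of_all _ fun x => ?_)
        · have := jb_pos (x - α); have := jb_pos (x - β); positivity
        · have h := jb_rpow_mul_jb_rpow_le (s := s) (t := t) (by linarith) (by linarith)
            (x - α) (x - β)
          rwa [sub_sub_sub_cancel_left] at h
    _ = (∫ y, G y) + ∫ y, H y := by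
        rw [integral_add (hG.comp_sub_right α) (hH.comp_sub_right β), integral_sub_right_eq_self G,
          integral_sub_right_eq_self H]
    _ ≤ 2 * (2 ^ t / (1 - s) + 1 / (s + t - 1)) * D ^ (-(s + t - 1)) +
        2 * (2 ^ s / (1 - t) + 1 / (t + s - 1)) * D ^ (-(t + s - 1)) :=
        add_le_add (integral_jb_rpow_mul_min_le hs hst (rpow_nonneg zero_le_two _) (one_le_jb _))
          (integral_jb_rpow_mul_min_le ht (by linarith) (rpow_nonneg zero_le_two _) (one_le_jb _))
    _ = _ := by rw [add_comm t s]; ring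

end

/-- For all `a, b ∈ (1/4, 1/2)` there exists `C > 0` (depending only on `a`, `b`) such that
for all `α β : ℝ`, `∫ ⟨x-α⟩^{-2a} ⟨x-β⟩^{-2b} dx ≤ C ⟨α-β⟩^{-(2a+2b-1)}`. -/
theorem stmt0 (a b : ℝ) (ha : a ∈ Set.Ioo (1/4 : ℝ) (1/2)) (hb : b ∈ Set.Ioo (1/4 : ℝ) (1/2)) :
    ∃ C : ℝ, 0 < C ∧ ∀ α β : ℝ,
      (∫ x : ℝ, jb (x - α) ^ (-(2 * a)) * jb (x - β) ^ (-(2 * b))) ≤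
        C * jb (α - β) ^ (-(2 * a + 2 * b - 1)) := by
  obtain ⟨ha1, ha2⟩ := ha
  obtain ⟨hb1, hb2⟩ := hb
  have hpa : 0 < 1 - 2 * a := by linarith
  have hpb : 0 < 1 - 2 * b := by linarith
  have hpab : 0 < 2 * a + 2 * b - 1 := by linarith
  exact ⟨_, by positivity,
    integral_jb_rpow_mul_jb_rpow_le (by linarith) (by linarith) (by linarith)⟩

end
end

section
/- Let a ∈ (1/4, 1/2) and b ∈ (1/3, 1/2) satisfy a + 2b > 4/3. Then sup_{(ξ,τ)∈ℝ²} |ξ|⟨ξ⟩ ⟨τ−ξ³⟩^{−a} ( ∫_{D(ξ,τ)} ⟨−τ₁+ξ₁²⟩^{−2b} ⟨τ−τ₁+(ξ−ξ₁)²⟩^{−2b} ⟨ξ₁⟩^{−2} ⟨ξ−ξ₁⟩^{−2} dτ₁ dξ₁ )^{1/2} < ∞, where D(ξ,τ) = {(ξ₁,τ₁) ∈ ℝ² : ⟨τ−ξ³⟩ ≥ ⟨−τ₁+ξ₁²⟩ and ⟨τ−ξ³⟩ ≥ ⟨τ−τ₁+(ξ−ξ₁)²⟩}. -/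
/-!
Write `L = ⟨τ - ξ³⟩`. After the shear `s = τ₁ - ξ₁²` the factor `⟨-τ₁ + ξ₁²⟩^{-2b}` depends on `s`
alone and lives on `|s| ≤ L - 1`, so the `s`-integral contributes at most `2 L^{1-2b} / (1-2b)`,
while the remaining factors are bounded by an integrable kernel `K(ξ₁)`. If `|ξ|³ ≤ 8L`, the kernel
`⟨ξ₁⟩^{-2}⟨ξ-ξ₁⟩^{-2} ≤ 2⟨ξ⟩^{-2}(⟨ξ₁⟩^{-2} + ⟨ξ-ξ₁⟩^{-2})` and `|ξ|² ≤ 4 L^{2/3}` suffice.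
Otherwise the resonance identity `(τ-ξ³) + (-τ₁+ξ₁²) - (τ-τ₁+(ξ-ξ₁)²) = ξ(2ξ₁ - ξ - ξ²)` forces
`2ξ₁ ≈ ξ²` on `D(ξ,τ)`, so `⟨ξ-ξ₁⟩ ≥ ξ²/4`. Both cases give `(|ξ|⟨ξ⟩)² ∫_D ≲ L^{5/3-2b}`, and
`a + b > 5/6` turns this into the bound.
-/

open MeasureTheory Real Set

noncomputable section

lemma jb_neg (c : ℝ) : jb (-c) = jb c := by rw [jb, jb, abs_neg]

lemma jb_add_le (c d : ℝ) : jb (c + d) ≤ jb c + jb d := by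
  unfold jb; linarith [abs_add_le c d]

@[fun_prop]
lemma continuous_jb : Continuous jb := continuous_const.add continuous_abs

lemma jb_rpow_nonneg (c e : ℝ) : 0 ≤ jb c ^ e := rpow_nonneg (jb_pos c).le e

lemma jb_rpow_le_one (c : ℝ) {e : ℝ} (he : e ≤ 0) : jb c ^ e ≤ 1 :=
  rpow_le_one_of_one_le_of_nonpos (one_le_jb c) he

lemma setOf_jb_le (L : ℝ) : {s | jb s ≤ L} = Icc (-(L - 1)) (L - 1) := by
  ext s; simp only [jb, mem_ofPred_eq, mem_Icc, ← abs_le]; constructor <;> intro <;> linarith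

lemma integrable_jb_rpow_neg_two : Integrable fun x : ℝ => jb x ^ (-(2 : ℝ)) := by
  simpa [jb] using integrable_one_add_norm (E := ℝ) (μ := volume) (r := 2) (by norm_num)

lemma integral_jb_sub_rpow_neg_two (ξ : ℝ) :
    ∫ x, jb (ξ - x) ^ (-(2 : ℝ)) = ∫ x, jb x ^ (-(2 : ℝ)) :=
  integral_sub_left_eq_self (fun x => jb x ^ (-(2 : ℝ))) volume ξ

lemma integrable_jb_sub_rpow_neg_two (ξ : ℝ) : Integrable fun x : ℝ => jb (ξ - x) ^ (-(2 : ℝ)) :=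
  integrable_jb_rpow_neg_two.comp_sub_left ξ

lemma intervalIntegral_jb_rpow_le {β c : ℝ} (hβ : β < 1) (hc : 0 ≤ c) :
    ∫ s in (-c)..c, jb s ^ (-β) ≤ 2 * (1 + c) ^ (1 - β) / (1 - β) := by
  have hcont : Continuous fun s => jb s ^ (-β) :=
    continuous_jb.rpow_const fun s => Or.inl (jb_pos s).ne'
  have hhalf : ∫ s in (0 : ℝ)..c, jb s ^ (-β) = ((1 + c) ^ (1 - β) - 1) / (1 - β) := by
    rw [intervalIntegral.integral_congr (g := fun s => (1 + s) ^ (-β)) fun s hs => by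
        rw [uIcc_of_le hc] at hs; simp only [jb, abs_of_nonneg hs.1],
      intervalIntegral.integral_comp_add_left (fun s => s ^ (-β)),
      integral_rpow (Or.inl (by linarith))]
    norm_num [show -β + 1 = 1 - β by ring]
  have hneg : ∫ s in (-c)..0, jb s ^ (-β) = ∫ s in (0 : ℝ)..c, jb s ^ (-β) := by
    simpa [jb_neg] using
      (intervalIntegral.integral_comp_neg (a := 0) (b := c) fun s => jb s ^ (-β)).symm
  rw [← intervalIntegral.integral_add_adjacent_intervals (b := 0)
    (hcont.intervalIntegrable _ _) (hcont.intervalIntegrable _ _), hneg, hhalf]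
  have : 0 < 1 - β := by linarith
  rw [← add_div, div_le_div_iff_of_pos_right this]; linarith

lemma measurableSet_setOf_jb_le (L : ℝ) : MeasurableSet {s | jb s ≤ L} := by
  rw [setOf_jb_le]; exact measurableSet_Icc

lemma integrable_indicator_jb_rpow (β L : ℝ) :
    Integrable ({s | jb s ≤ L}.indicator fun s => jb s ^ (-β)) := by
  rw [integrable_indicator_iff (measurableSet_setOf_jb_le L), setOf_jb_le]
  exact (continuous_jb.rpow_const fun s => Or.inl (jb_pos s).ne').integrableOn_Icc

lemma integral_indicator_jb_rpow_le {β L : ℝ} (hβ : β < 1) (hL : 1 ≤ L) :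
    ∫ s, {s | jb s ≤ L}.indicator (fun s => jb s ^ (-β)) s ≤ 2 / (1 - β) * L ^ (1 - β) := by
  rw [integral_indicator (measurableSet_setOf_jb_le L), setOf_jb_le, integral_Icc_eq_integral_Ioc,
    ← intervalIntegral.integral_of_le (by linarith)]
  exact (intervalIntegral_jb_rpow_le hβ (by linarith)).trans_eq (by rw [add_sub_cancel]; ring)

lemma measurePreserving_shear :
    MeasurePreserving (fun q : ℝ × ℝ => (q.1, q.2 - q.1 ^ 2)) :=
  (MeasurePreserving.id volume).skew_product (g := fun x t => t - x ^ 2) (by fun_prop)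
    (ae_of_all _ fun x => map_sub_right_eq_self volume (x ^ 2))

lemma integrable_mul_comp_shear {K h : ℝ → ℝ} (hK : Integrable K) (hh : Integrable h) :
    Integrable fun q : ℝ × ℝ => K q.1 * h (q.2 - q.1 ^ 2) :=
  (measurePreserving_shear.integrable_comp (g := fun q : ℝ × ℝ => K q.1 * h q.2)
    (hK.mul_prod hh).aestronglyMeasurable).mpr (hK.mul_prod hh)

lemma integral_mul_comp_shear {K h : ℝ → ℝ} (hK : AEStronglyMeasurable K)
    (hh : AEStronglyMeasurable h) :
    ∫ q : ℝ × ℝ, K q.1 * h (q.2 - q.1 ^ 2) = (∫ x, K x) * ∫ s, h s := by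
  have hmap := measurePreserving_shear.map_eq
  calc ∫ q : ℝ × ℝ, K q.1 * h (q.2 - q.1 ^ 2)
      = ∫ q, K q.1 * h q.2 ∂(volume.map fun q : ℝ × ℝ => (q.1, q.2 - q.1 ^ 2)) :=
        (integral_map measurePreserving_shear.measurable.aemeasurable
          (by rw [hmap]; exact hK.comp_fst.mul hh.comp_snd)).symm
    _ = (∫ x, K x) * ∫ s, h s := by rw [hmap]; exact integral_prod_mul K h

/-- The region `D(ξ,τ)`, in the coordinates `q = (ξ₁, τ₁)`. -/
def regionD (ξ τ : ℝ) : Set (ℝ × ℝ) :=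
  {q | jb (-q.2 + q.1 ^ 2) ≤ jb (τ - ξ ^ 3) ∧ jb (τ - q.2 + (ξ - q.1) ^ 2) ≤ jb (τ - ξ ^ 3)}

def regionIntegrand (β ξ τ : ℝ) (q : ℝ × ℝ) : ℝ :=
  jb (-q.2 + q.1 ^ 2) ^ (-β) * jb (τ - q.2 + (ξ - q.1) ^ 2) ^ (-β) *
    jb q.1 ^ (-(2 : ℝ)) * jb (ξ - q.1) ^ (-(2 : ℝ))

lemma measurableSet_regionD (ξ τ : ℝ) : MeasurableSet (regionD ξ τ) := by
  rw [regionD, ofPred_and]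
  exact (measurableSet_le (by fun_prop) (by fun_prop)).inter
    (measurableSet_le (by fun_prop) (by fun_prop))

lemma regionIntegrand_nonneg (β ξ τ : ℝ) (q : ℝ × ℝ) : 0 ≤ regionIntegrand β ξ τ q :=
  mul_nonneg (mul_nonneg (mul_nonneg (jb_rpow_nonneg _ _) (jb_rpow_nonneg _ _))
    (jb_rpow_nonneg _ _)) (jb_rpow_nonneg _ _)

lemma setIntegral_regionIntegrand_le {β ξ τ : ℝ} (hβ : β < 1) {K : ℝ → ℝ} (hK : Integrable K)
    (hK0 : ∀ x, 0 ≤ K x)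
    (hbound : ∀ q ∈ regionD ξ τ,
      jb (τ - q.2 + (ξ - q.1) ^ 2) ^ (-β) * jb q.1 ^ (-(2 : ℝ)) * jb (ξ - q.1) ^ (-(2 : ℝ))
        ≤ K q.1) :
    ∫ q in regionD ξ τ, regionIntegrand β ξ τ q
      ≤ (∫ x, K x) * (2 / (1 - β)) * jb (τ - ξ ^ 3) ^ (1 - β) := by
  set L := jb (τ - ξ ^ 3)
  set h : ℝ → ℝ := {s | jb s ≤ L}.indicator fun s => jb s ^ (-β)
  have hh : Integrable h := integrable_indicator_jb_rpow β L
  have hdom : ∀ q, (regionD ξ τ).indicator (regionIntegrand β ξ τ) q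
      ≤ K q.1 * h (q.2 - q.1 ^ 2) := by
    intro q
    by_cases hq : q ∈ regionD ξ τ
    · have hjb : jb (q.2 - q.1 ^ 2) = jb (-q.2 + q.1 ^ 2) := by rw [← jb_neg]; ring_nf
      have hhq : h (q.2 - q.1 ^ 2) = jb (-q.2 + q.1 ^ 2) ^ (-β) := by
        simp only [h]
        rw [indicator_of_mem (show q.2 - q.1 ^ 2 ∈ {s | jb s ≤ L} by
          rw [mem_ofPred_eq, hjb]; exact hq.1), hjb]
      rw [indicator_of_mem hq, hhq, mul_comm (K _)]
      calc regionIntegrand β ξ τ q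
          = jb (-q.2 + q.1 ^ 2) ^ (-β) * (jb (τ - q.2 + (ξ - q.1) ^ 2) ^ (-β)
            * jb q.1 ^ (-(2 : ℝ)) * jb (ξ - q.1) ^ (-(2 : ℝ))) := by unfold regionIntegrand; ring
        _ ≤ _ := mul_le_mul_of_nonneg_left (hbound q hq) (jb_rpow_nonneg _ _)
    · rw [indicator_of_notMem hq]
      exact mul_nonneg (hK0 _) (indicator_nonneg (fun s _ => jb_rpow_nonneg s _) _)
  calc ∫ q in regionD ξ τ, regionIntegrand β ξ τ q
      = ∫ q, (regionD ξ τ).indicator (regionIntegrand β ξ τ) q :=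
        (integral_indicator (measurableSet_regionD ξ τ)).symm
    _ ≤ ∫ q : ℝ × ℝ, K q.1 * h (q.2 - q.1 ^ 2) :=
        integral_mono_of_nonneg
          (ae_of_all _ (indicator_nonneg fun q _ => regionIntegrand_nonneg β ξ τ q))
          (integrable_mul_comp_shear hK hh) (ae_of_all _ hdom)
    _ = (∫ x, K x) * ∫ s, h s := integral_mul_comp_shear hK.1 hh.1
    _ ≤ (∫ x, K x) * (2 / (1 - β) * L ^ (1 - β)) :=
        mul_le_mul_of_nonneg_left (integral_indicator_jb_rpow_le hβ (one_le_jb _))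
          (integral_nonneg hK0)
    _ = _ := by ring

lemma jb_rpow_neg_two (c : ℝ) : jb c ^ (-(2 : ℝ)) = (jb c ^ 2)⁻¹ := by
  rw [rpow_neg (jb_pos c).le, rpow_two]

lemma jb_rpow_neg_two_mul_le (ξ x : ℝ) :
    jb x ^ (-(2 : ℝ)) * jb (ξ - x) ^ (-(2 : ℝ))
      ≤ 2 / jb ξ ^ 2 * (jb x ^ (-(2 : ℝ)) + jb (ξ - x) ^ (-(2 : ℝ))) := by
  have hu := jb_pos x
  have hv := jb_pos (ξ - x)
  have hw := jb_pos ξ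
  have hsum : jb ξ ≤ jb x + jb (ξ - x) := by simpa using jb_add_le x (ξ - x)
  rw [jb_rpow_neg_two, jb_rpow_neg_two, div_mul_eq_mul_div, le_div_iff₀ (by positivity)]
  field_simp
  nlinarith [sq_nonneg (jb x - jb (ξ - x)), mul_self_le_mul_self hw.le hsum]

lemma two_lt_abs_of_eight_mul_jb_lt {c ξ : ℝ} (h : 8 * jb c < |ξ| ^ 3) : 2 < |ξ| := by
  by_contra! h'
  nlinarith [one_le_jb c, pow_le_pow_left₀ (abs_nonneg ξ) h' 3]

lemma sq_div_four_le_jb_sub {ξ τ : ℝ} (hξ : 8 * jb (τ - ξ ^ 3) < |ξ| ^ 3) {q : ℝ × ℝ}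
    (hq : q ∈ regionD ξ τ) : ξ ^ 2 / 4 ≤ jb (ξ - q.1) := by
  have hξ0 : 0 < |ξ| := by linarith [two_lt_abs_of_eight_mul_jb_lt hξ]
  obtain ⟨x, t⟩ := q
  obtain ⟨h₁, h₂⟩ := hq
  simp only [jb] at h₁ h₂ hξ ⊢
  have hres : |ξ| * |2 * x - ξ - ξ ^ 2| ≤ 3 * |τ - ξ ^ 3| := by
    rw [← abs_mul, show ξ * (2 * x - ξ - ξ ^ 2)
      = (τ - ξ ^ 3) + (-t + x ^ 2) - (τ - t + (ξ - x) ^ 2) by ring]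
    linarith [abs_sub ((τ - ξ ^ 3) + (-t + x ^ 2)) (τ - t + (ξ - x) ^ 2),
      abs_add_le (τ - ξ ^ 3) (-t + x ^ 2)]
  have hcub : |ξ| ^ 3 = |ξ| * ξ ^ 2 := by rw [← sq_abs ξ]; ring
  have hnear : |2 * x - ξ - ξ ^ 2| < 3 / 8 * ξ ^ 2 := by
    refine lt_of_mul_lt_mul_left ?_ hξ0.le
    nlinarith
  have hx := (abs_lt.1 hnear).1
  nlinarith [le_abs_self ξ, neg_abs_le (ξ - x), sq_nonneg (|ξ| / 4 - 1), sq_abs ξ]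

lemma jb_rpow_mul_le {β : ℝ} (hβ : 0 ≤ β) (c x y : ℝ) :
    jb c ^ (-β) * jb x ^ (-(2 : ℝ)) * jb y ^ (-(2 : ℝ))
      ≤ jb x ^ (-(2 : ℝ)) * jb y ^ (-(2 : ℝ)) := by
  rw [mul_assoc]
  exact mul_le_of_le_one_left (mul_nonneg (jb_rpow_nonneg _ _) (jb_rpow_nonneg _ _))
    (jb_rpow_le_one _ (by linarith))

lemma setIntegral_regionIntegrand_le_jb {β : ℝ} (hβ0 : 0 ≤ β) (hβ : β < 1) (ξ τ : ℝ) :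
    ∫ q in regionD ξ τ, regionIntegrand β ξ τ q
      ≤ 4 * (∫ x, jb x ^ (-(2 : ℝ))) / jb ξ ^ 2 * (2 / (1 - β)) * jb (τ - ξ ^ 3) ^ (1 - β) := by
  have hK : Integrable fun x => 2 / jb ξ ^ 2 * (jb x ^ (-(2 : ℝ)) + jb (ξ - x) ^ (-(2 : ℝ))) :=
    (integrable_jb_rpow_neg_two.add (integrable_jb_sub_rpow_neg_two ξ)).const_mul _
  convert setIntegral_regionIntegrand_le hβ hK
    (fun x => mul_nonneg (by positivity) (add_nonneg (jb_rpow_nonneg _ _) (jb_rpow_nonneg _ _)))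
    (fun q _ => ?_) using 2
  · rw [integral_const_mul,
      integral_add integrable_jb_rpow_neg_two (integrable_jb_sub_rpow_neg_two ξ),
      integral_jb_sub_rpow_neg_two]
    ring
  · exact (jb_rpow_mul_le hβ0 _ _ _).trans (jb_rpow_neg_two_mul_le ξ q.1)

lemma setIntegral_regionIntegrand_le_of_lt {β ξ τ : ℝ} (hβ0 : 0 ≤ β) (hβ : β < 1)
    (hξ : 8 * jb (τ - ξ ^ 3) < |ξ| ^ 3) :
    ∫ q in regionD ξ τ, regionIntegrand β ξ τ q
      ≤ 16 * (∫ x, jb x ^ (-(2 : ℝ))) / ξ ^ 4 * (2 / (1 - β)) * jb (τ - ξ ^ 3) ^ (1 - β) := by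
  have hK := integrable_jb_rpow_neg_two.const_mul (16 / ξ ^ 4)
  convert setIntegral_regionIntegrand_le hβ hK
    (fun x => mul_nonneg (by positivity) (jb_rpow_nonneg _ _)) (fun q hq => ?_) using 2
  · rw [integral_const_mul]
    ring
  · have hfar := sq_div_four_le_jb_sub hξ hq
    have hsq : (0 : ℝ) < ξ ^ 2 / 4 := by
      have : ξ ≠ 0 := abs_pos.1 (by linarith [two_lt_abs_of_eight_mul_jb_lt hξ])
      positivity
    have : jb (ξ - q.1) ^ (-(2 : ℝ)) ≤ 16 / ξ ^ 4 := by
      rw [jb_rpow_neg_two]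
      calc (jb (ξ - q.1) ^ 2)⁻¹ ≤ ((ξ ^ 2 / 4) ^ 2)⁻¹ := by gcongr
        _ = 16 / ξ ^ 4 := by ring
    calc _ ≤ jb q.1 ^ (-(2 : ℝ)) * jb (ξ - q.1) ^ (-(2 : ℝ)) := jb_rpow_mul_le hβ0 _ _ _
      _ ≤ jb q.1 ^ (-(2 : ℝ)) * (16 / ξ ^ 4) := by gcongr; exact jb_rpow_nonneg _ _
      _ = _ := mul_comm _ _

lemma sq_le_four_mul_rpow_two_thirds {x L : ℝ} (hL : 0 ≤ L) (h : |x| ^ 3 ≤ 8 * L) :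
    x ^ 2 ≤ 4 * L ^ (2 / 3 : ℝ) := by
  have hcube : (L ^ (1 / 3 : ℝ)) ^ 3 = L := by
    rw [← rpow_natCast, ← rpow_mul hL]; norm_num
  have hroot : |x| ≤ 2 * L ^ (1 / 3 : ℝ) :=
    le_of_pow_le_pow_left₀ three_ne_zero (by positivity) (by rw [mul_pow, hcube]; linarith)
  have hsq : L ^ (2 / 3 : ℝ) = (L ^ (1 / 3 : ℝ)) ^ 2 := by
    rw [← rpow_natCast, ← rpow_mul hL]; norm_num
  rw [hsq, ← sq_abs]
  nlinarith [abs_nonneg x]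

theorem exists_sq_mul_setIntegral_regionIntegrand_le {β : ℝ} (hβ0 : 0 ≤ β) (hβ : β < 1) :
    ∃ A, 0 ≤ A ∧ ∀ ξ τ : ℝ, (|ξ| * jb ξ) ^ 2 * ∫ q in regionD ξ τ, regionIntegrand β ξ τ q
      ≤ A * jb (τ - ξ ^ 3) ^ (5 / 3 - β) := by
  set B := ∫ x, jb x ^ (-(2 : ℝ))
  have hB : 0 ≤ B := integral_nonneg fun x => jb_rpow_nonneg _ _
  have hD : 0 < 2 / (1 - β) := div_pos two_pos (by linarith)
  refine ⟨36 * B * (2 / (1 - β)), by positivity, fun ξ τ => ?_⟩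
  set L := jb (τ - ξ ^ 3)
  have hL : 1 ≤ L := one_le_jb _
  have hLβ : 0 ≤ L ^ (1 - β) := jb_rpow_nonneg _ _
  have hsplit : L ^ (5 / 3 - β) = L ^ (2 / 3 : ℝ) * L ^ (1 - β) := by
    rw [← rpow_add (by linarith)]; ring_nf
  have hjb := jb_pos ξ
  rcases le_or_gt (|ξ| ^ 3) (8 * L) with hsmall | hlarge
  · calc (|ξ| * jb ξ) ^ 2 * ∫ q in regionD ξ τ, regionIntegrand β ξ τ q
        ≤ (|ξ| * jb ξ) ^ 2 * (4 * B / jb ξ ^ 2 * (2 / (1 - β)) * L ^ (1 - β)) := by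
          gcongr; exact setIntegral_regionIntegrand_le_jb hβ0 hβ ξ τ
      _ = 4 * B * (2 / (1 - β)) * ξ ^ 2 * L ^ (1 - β) := by
          field_simp; rw [sq_abs]; ring
      _ ≤ 4 * B * (2 / (1 - β)) * (4 * L ^ (2 / 3 : ℝ)) * L ^ (1 - β) := by
          gcongr; exact sq_le_four_mul_rpow_two_thirds (by linarith) hsmall
      _ ≤ 36 * B * (2 / (1 - β)) * L ^ (5 / 3 - β) := by
          rw [hsplit]
          have := rpow_nonneg (zero_le_one.trans hL) (2 / 3 : ℝ)
          nlinarith [mul_nonneg (mul_nonneg (mul_nonneg hB hD.le) this) hLβ]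
  · have hξ := two_lt_abs_of_eight_mul_jb_lt hlarge
    have hratio : jb ξ / |ξ| ≤ 3 / 2 := by
      rw [div_le_iff₀ (by linarith), jb]; linarith
    calc (|ξ| * jb ξ) ^ 2 * ∫ q in regionD ξ τ, regionIntegrand β ξ τ q
        ≤ (|ξ| * jb ξ) ^ 2 * (16 * B / ξ ^ 4 * (2 / (1 - β)) * L ^ (1 - β)) := by
          gcongr; exact setIntegral_regionIntegrand_le_of_lt hβ0 hβ hlarge
      _ = 16 * B * (2 / (1 - β)) * (jb ξ / |ξ|) ^ 2 * L ^ (1 - β) := by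
          have : |ξ| ≠ 0 := by linarith
          rw [← Even.pow_abs (by decide : Even 4) ξ]
          field_simp
      _ ≤ 16 * B * (2 / (1 - β)) * (3 / 2) ^ 2 * L ^ (5 / 3 - β) := by
          have hpos : 0 ≤ 16 * B * (2 / (1 - β)) := by positivity
          gcongr ?_ * ?_
          · exact mul_le_mul_of_nonneg_left
              (pow_le_pow_left₀ (div_nonneg hjb.le (abs_nonneg ξ)) hratio 2) hpos
          · exact rpow_le_rpow_of_exponent_le hL (by linarith)
      _ = 36 * B * (2 / (1 - β)) * L ^ (5 / 3 - β) := by ring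

lemma mul_rpow_half_eq {x y : ℝ} (hx : 0 ≤ x) (hy : 0 ≤ y) :
    x * y ^ (1 / 2 : ℝ) = (x ^ 2 * y) ^ (1 / 2 : ℝ) := by
  rw [mul_rpow (sq_nonneg x) hy, ← rpow_natCast, ← rpow_mul hx]; norm_num

theorem stmt8_general (a b : ℝ) (hb : b ∈ Set.Ioo (1/3 : ℝ) (1/2))
    (hab : 4/3 < a + 2 * b) :
    ∃ C : ℝ, ∀ ξ τ : ℝ,
      |ξ| * jb ξ * jb (τ - ξ ^ 3) ^ (-a) *
        (∫ q : ℝ × ℝ in {q : ℝ × ℝ |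
            jb (-q.2 + q.1 ^ 2) ≤ jb (τ - ξ ^ 3) ∧
            jb (τ - q.2 + (ξ - q.1) ^ 2) ≤ jb (τ - ξ ^ 3)},
          jb (-q.2 + q.1 ^ 2) ^ (-(2 * b)) * jb (τ - q.2 + (ξ - q.1) ^ 2) ^ (-(2 * b)) *
            jb q.1 ^ (-(2 : ℝ)) * jb (ξ - q.1) ^ (-(2 : ℝ))) ^ (1/2 : ℝ)
        ≤ C := by
  obtain ⟨hb₁, hb₂⟩ := hb
  obtain ⟨A, hA, hbound⟩ :=
    exists_sq_mul_setIntegral_regionIntegrand_le (β := 2 * b) (by linarith) (by linarith)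
  refine ⟨A ^ (1 / 2 : ℝ), fun ξ τ => ?_⟩
  change |ξ| * jb ξ * jb (τ - ξ ^ 3) ^ (-a) *
    (∫ q in regionD ξ τ, regionIntegrand (2 * b) ξ τ q) ^ (1 / 2 : ℝ) ≤ _
  set L := jb (τ - ξ ^ 3)
  have hL : 1 ≤ L := one_le_jb _
  have hI := setIntegral_nonneg (μ := volume) (measurableSet_regionD ξ τ)
    fun q _ => regionIntegrand_nonneg (2 * b) ξ τ q
  calc |ξ| * jb ξ * L ^ (-a) * (∫ q in regionD ξ τ, regionIntegrand (2 * b) ξ τ q) ^ (1 / 2 : ℝ)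
      = L ^ (-a) * ((|ξ| * jb ξ) ^ 2 * ∫ q in regionD ξ τ, regionIntegrand (2 * b) ξ τ q)
          ^ (1 / 2 : ℝ) := by
        rw [← mul_rpow_half_eq (mul_nonneg (abs_nonneg ξ) (jb_pos ξ).le) hI]; ring
    _ ≤ L ^ (-a) * (A * L ^ (5 / 3 - 2 * b)) ^ (1 / 2 : ℝ) := by
        gcongr _ * ?_ ^ _
        exact hbound ξ τ
    _ = A ^ (1 / 2 : ℝ) * L ^ (5 / 6 - b - a) := by
        rw [mul_rpow hA (jb_rpow_nonneg _ _), ← rpow_mul (zero_le_one.trans hL),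
          mul_left_comm, ← rpow_add (by linarith)]
        ring_nf
    _ ≤ A ^ (1 / 2 : ℝ) :=
        mul_le_of_le_one_right (rpow_nonneg hA _) (rpow_le_one_of_one_le_of_nonpos hL (by linarith))

/-- Region I estimate in the proof of `‖∂ₓ(g h̄)‖_{Y_{-a,1}} ≤ C‖g‖_{X_{b,1}}‖h‖_{X_{b,1}}`:
for `a ∈ (1/4,1/2)`, `b ∈ (1/3,1/2)` with `a + 2b > 4/3`, the sup over `(ξ,τ)` of
`|ξ|⟨ξ⟩⟨τ-ξ³⟩^{-a} (∫_{D(ξ,τ)} ⟨-τ₁+ξ₁²⟩^{-2b} ⟨τ-τ₁+(ξ-ξ₁)²⟩^{-2b} ⟨ξ₁⟩^{-2} ⟨ξ-ξ₁⟩^{-2}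
dτ₁ dξ₁)^{1/2}` is finite, where `D(ξ,τ)` consists of `(ξ₁,τ₁)` with
`⟨τ-ξ³⟩ ≥ ⟨-τ₁+ξ₁²⟩` and `⟨τ-ξ³⟩ ≥ ⟨τ-τ₁+(ξ-ξ₁)²⟩`. -/
theorem stmt8 (a b : ℝ) (ha : a ∈ Set.Ioo (1/4 : ℝ) (1/2)) (hb : b ∈ Set.Ioo (1/3 : ℝ) (1/2))
    (hab : 4/3 < a + 2 * b) :
    ∃ C : ℝ, ∀ ξ τ : ℝ,
      |ξ| * jb ξ * jb (τ - ξ ^ 3) ^ (-a) *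
        (∫ q : ℝ × ℝ in {q : ℝ × ℝ |
            jb (-q.2 + q.1 ^ 2) ≤ jb (τ - ξ ^ 3) ∧
            jb (τ - q.2 + (ξ - q.1) ^ 2) ≤ jb (τ - ξ ^ 3)},
          jb (-q.2 + q.1 ^ 2) ^ (-(2 * b)) * jb (τ - q.2 + (ξ - q.1) ^ 2) ^ (-(2 * b)) *
            jb q.1 ^ (-(2 : ℝ)) * jb (ξ - q.1) ^ (-(2 : ℝ))) ^ (1/2 : ℝ)
        ≤ C :=
  stmt8_general a b hb hab

end
end
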